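/- Let P and Q be perfect-tree forcing notions with P ⊑ Q (Q is a refinement of P). Then for any S ∈ P and T ∈ Q, the set [S] ∩ [T] is meager in [S]; consequently P ∩ Q = ∅, and Q is open dense in P ∪ Q, i.e. every T ∈ P ∪ Q has a subtree in Q, and whenever T ∈ Q, R ∈ P ∪ Q and R ⊆ T, then R ∈ Q. -/

import Mathlib

noncomputable section

/-- Finite binary strings. -/
abbrev Str : Type := List Bool

/-- Points of Cantor space `2^ω`. -/
abbrev Pt : Type := ℕ → Bool

/-- The length-`n` initial segment of a point of Cantor space, as a string. -/
def seg (a : Pt) (n : ℕ) : Str := (List.range n).map a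

/-- A tree: a set of strings closed under initial segments. -/
def IsTree (T : Set Str) : Prop := ∀ ⦃s t : Str⦄, s <+: t → t ∈ T → s ∈ T

/-- A perfect tree: a nonempty tree in which every string has two
incomparable extensions inside the tree. -/
def IsPerfectTree (T : Set Str) : Prop :=
  T.Nonempty ∧ IsTree T ∧
    ∀ s ∈ T, ∃ t₁ t₂, t₁ ∈ T ∧ t₂ ∈ T ∧ s <+: t₁ ∧ s <+: t₂ ∧ ¬ t₁ <+: t₂ ∧ ¬ t₂ <+: t₁

/-- The restriction `T↾s = {t ∈ T : s ⊆ t or t ⊆ s}`. -/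
def Tres (T : Set Str) (s : Str) : Set Str := {t ∈ T | s <+: t ∨ t <+: s}

/-- The set `[T]` of branches of a tree `T`. -/
def branches (T : Set Str) : Set Pt := {a | ∀ n, seg a n ∈ T}

/-- `s` is the stem (root) of `T`: the longest `s ∈ T` with `T = T↾s`. -/
def IsStem (T : Set Str) (s : Str) : Prop :=
  s ∈ T ∧ T = Tres T s ∧ ∀ t ∈ T, T = Tres T t → t <+: s

open Classical in
/-- The stem `root(T)` of a tree (junk value `[]` if there is none). -/
def stem (T : Set Str) : Str := if h : ∃ s, IsStem T s then h.choose else []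

/-- Simple splitting `T→i = T↾(root(T)⌢i)`. -/
def splitOne (T : Set Str) (i : Bool) : Set Str := Tres T (stem T ++ [i])

/-- Iterated splitting `T→u`. -/
def splitIter (T : Set Str) (u : Str) : Set Str := u.foldl splitOne T

/-- Almost disjointness of trees: finite intersection. -/
def AD (S T : Set Str) : Prop := (S ∩ T).Finite

/-- A perfect-tree forcing notion: a nonempty set of perfect trees closed
under restrictions. -/
def IsPTF (P : Set (Set Str)) : Prop :=
  P.Nonempty ∧ (∀ T ∈ P, IsPerfectTree T) ∧ ∀ T ∈ P, ∀ s ∈ T, Tres T s ∈ P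

/-- `A` is relatively clopen in `B` (as a subspace of Cantor space). -/
def ClopenIn (A B : Set Pt) : Prop := IsClopen ((fun x : B => (x : Pt)) ⁻¹' A)

/-- `A` is relatively open in `B` (as a subspace of Cantor space). -/
def OpenIn (A B : Set Pt) : Prop := IsOpen ((fun x : B => (x : Pt)) ⁻¹' A)

/-- A special perfect-tree forcing notion: `P = {T↾s : s ∈ T ∈ A}` for an
antichain (pairwise a.d. set) `A ⊆ P`. -/
def SpecialPTF (P : Set (Set Str)) : Prop :=
  ∃ A ⊆ P, A.Pairwise AD ∧ P = {R | ∃ T ∈ A, ∃ s ∈ T, R = Tres T s}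

/-- A regular perfect-tree forcing notion: `[S] ∩ [T]` is relatively clopen
in `[S]` or in `[T]`, for all `S, T ∈ P`. -/
def RegularPTF (P : Set (Set Str)) : Prop :=
  ∀ S ∈ P, ∀ T ∈ P,
    ClopenIn (branches S ∩ branches T) (branches S) ∨
    ClopenIn (branches S ∩ branches T) (branches T)

/-- `T ⊆ᶠ ⋃ D`: `[T]` is covered by finitely many `[S]`, `S ∈ D`. -/
def SqFin (T : Set Str) (D : Set (Set Str)) : Prop :=
  ∃ D' ⊆ D, D'.Finite ∧ branches T ⊆ ⋃ S ∈ D', branches S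

/-- `P ⊑ Q`: `Q` is a refinement of `P`. -/
def Refines (P Q : Set (Set Str)) : Prop :=
  (∀ T ∈ P, ∃ S ∈ Q, S ⊆ T) ∧
  (∀ S ∈ Q, SqFin S P) ∧
  (∀ S ∈ Q, ∀ T ∈ P, ClopenIn (branches S ∩ branches T) (branches S) ∧ ¬ T ⊆ S)

/-- `D` is dense in `P`. -/
def DenseIn (D P : Set (Set Str)) : Prop := ∀ T ∈ P, ∃ S ∈ D, S ⊆ T

/-- `D` is pre-dense in `P`. -/
def PreDenseIn (D P : Set (Set Str)) : Prop :=
  DenseIn {T ∈ P | ∃ S ∈ D, T ⊆ S} P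

/-- `P ⊑_D Q`: `Q` locks `D` over `P`. -/
def Locks (P D Q : Set (Set Str)) : Prop :=
  Refines P Q ∧ ∀ S ∈ Q, SqFin S D

/-- A finite splitting system of height `n` over `P`. -/
def IsFSS (P : Set (Set Str)) (n : ℕ) (φ : Str → Set Str) : Prop :=
  (∀ s : Str, s.length ≤ n → φ s ∈ P) ∧
  ∀ (s : Str) (i : Bool), s.length < n → φ (s ++ [i]) ⊆ splitOne (φ s) i

/-!
If `[S] ∩ [T]` were not meagre in `[S]`, this relatively closed set would contain a basic open set
`[S] ∩ [s]` with `s ∈ S`, i.e. `[S↾s] ⊆ [T]`. As `S↾s ∈ P` is perfect, it is then a subtree of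
`T ∈ Q`, which clause (iii) of `P ⊑ Q` forbids. The remaining claims are immediate from the
same clause `¬ R ⊆ T` for `R ∈ P`, `T ∈ Q`, together with clause (i).
-/

open PiNat Topology

@[simp]
lemma length_seg (a : Pt) (n : ℕ) : (seg a n).length = n := by
  simp [seg]

lemma seg_eq_seg_iff_mem_cylinder {a b : Pt} {n : ℕ} : seg b n = seg a n ↔ b ∈ cylinder a n := by
  simp [seg, List.map_inj_left, mem_cylinder_iff]

lemma isClosed_branches (T : Set Str) : IsClosed (branches T) := by
  simp only [branches, Set.ofPred_forall]
  refine isClosed_iInter fun n => ?_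
  rw [← isOpen_compl_iff, isOpen_iff_forall_mem_open]
  refine fun a ha => ⟨cylinder a n, fun b hb => ?_, isOpen_cylinder _ a n, self_mem_cylinder a n⟩
  rwa [Set.mem_compl_iff, Set.mem_ofPred_eq, seg_eq_seg_iff_mem_cylinder.mpr hb]

lemma List.IsPrefix.of_forall_succ {f : ℕ → Str} (hf : ∀ n, f n <+: f (n + 1)) {m n : ℕ}
    (hmn : m ≤ n) : f m <+: f n := by
  induction n, hmn using Nat.le_induction with
  | base => exact List.prefix_rfl
  | succ n _ ih => exact ih.trans (hf n)

lemma exists_seg_eq_take {f : ℕ → Str} (hf : ∀ n, f n <+: f (n + 1))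
    (hlen : ∀ n, n ≤ (f n).length) : ∃ a : Pt, ∀ n, seg a n = (f n).take n := by
  have hi : ∀ i, i < (f (i + 1)).length := fun i => hlen (i + 1)
  refine ⟨fun i => (f (i + 1))[i]'(hi i), fun n => List.ext_getElem (by simp [hlen n]) ?_⟩
  intro i hin _
  have hin : i < n := by simpa using hin
  simpa [seg] using (List.IsPrefix.of_forall_succ hf hin).getElem (hi i)

lemma IsTree.exists_mem_branches_seg_eq {T : Set Str} (hT : IsTree T)
    (hext : ∀ s ∈ T, ∃ t ∈ T, s <+: t ∧ s.length < t.length) {t : Str} (ht : t ∈ T) :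
    ∃ a ∈ branches T, seg a t.length = t := by
  choose g hgT hgpre hglen using hext
  let f : ℕ → T := fun n => (fun s : T => (⟨g s s.2, hgT s s.2⟩ : T))^[n] ⟨t, ht⟩
  have hf : ∀ n, (f (n + 1)).1 = g (f n) (f n).2 := fun n => by
    simp only [f, Function.iterate_succ_apply']
  have hchain : ∀ n, (f n).1 <+: (f (n + 1)).1 := fun n => hf n ▸ hgpre _ _
  have hlen : ∀ n, n ≤ (f n).1.length := by
    intro n
    induction n with
    | zero => exact Nat.zero_le _
    | succ n ih => have := hglen _ (f n).2; rw [← hf] at this; omega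
  obtain ⟨a, ha⟩ := exists_seg_eq_take hchain hlen
  refine ⟨a, fun n => ha n ▸ hT (List.take_prefix n _) (f n).2, ?_⟩
  have ht_pre : t <+: (f t.length).1 := List.IsPrefix.of_forall_succ hchain (Nat.zero_le _)
  rw [ha, ← List.prefix_iff_eq_take.mp ht_pre]

lemma IsPerfectTree.exists_prefix_length_lt {T : Set Str} (hT : IsPerfectTree T) {s : Str}
    (hs : s ∈ T) : ∃ t ∈ T, s <+: t ∧ s.length < t.length := by
  obtain ⟨t₁, t₂, ht₁, -, hst₁, hst₂, hincomp, -⟩ := hT.2.2 s hs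
  refine ⟨t₁, ht₁, hst₁, lt_of_le_of_ne hst₁.length_le fun hlen => hincomp ?_⟩
  exact hst₁.eq_of_length hlen ▸ hst₂

lemma IsPerfectTree.subset_of_branches_subset {R T : Set Str} (hR : IsPerfectTree R)
    (h : branches R ⊆ branches T) : R ⊆ T := by
  intro t ht
  obtain ⟨a, haR, hseg⟩ :=
    hR.2.1.exists_mem_branches_seg_eq (fun _ => hR.exists_prefix_length_lt) ht
  simpa [hseg] using h haR t.length

lemma seg_length_eq_of_mem_branches_Tres {S : Set Str} {s : Str} {a : Pt}
    (ha : a ∈ branches (Tres S s)) : seg a s.length = s := by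
  rcases (ha s.length).2 with h | h
  · exact (h.eq_of_length (length_seg a _).symm).symm
  · exact h.eq_of_length (length_seg a _)

lemma exists_branches_Tres_subset_of_not_isMeagre {S T : Set Str}
    (h : ¬ IsMeagre ((fun x : branches S => (x : Pt)) ⁻¹' (branches S ∩ branches T))) :
    ∃ s ∈ S, branches (Tres S s) ⊆ branches T := by
  set A := (fun x : branches S => (x : Pt)) ⁻¹' (branches S ∩ branches T)
  have hA : IsClosed A := by
    have : A = (↑) ⁻¹' branches T := by ext x; simp [A]
    rw [this]
    exact (isClosed_branches T).preimage continuous_subtype_val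
  obtain ⟨x, -, hxA⟩ : ∃ x ∈ A, A ∈ 𝓝 x := by
    simpa [isNowhereDense_iff_forall_notMem_nhds, hA.closure_eq] using
      mt IsNowhereDense.isMeagre h
  obtain ⟨u, hu, huA⟩ := (mem_nhds_subtype _ x A).mp hxA
  obtain ⟨-, ⟨y, n, rfl⟩, hxy, hyu⟩ := (isTopologicalBasis_cylinders _).mem_nhds_iff.mp hu
  rw [← mem_cylinder_iff_eq.mp hxy] at hyu
  refine ⟨seg x n, x.2 n, fun a ha => ?_⟩
  have haS : a ∈ branches S := fun m => (ha m).1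
  have hcyl : a ∈ cylinder (x : Pt) n := by
    have := seg_length_eq_of_mem_branches_Tres ha
    rwa [length_seg, seg_eq_seg_iff_mem_cylinder] at this
  exact (huA (hyu hcyl : (⟨a, haS⟩ : branches S).1 ∈ u)).2

theorem stmt12_general (P Q : Set (Set Str)) (hP : IsPTF P)
    (h : Refines P Q) :
    (∀ S ∈ P, ∀ T ∈ Q,
      IsMeagre ((fun x : branches S => (x : Pt)) ⁻¹' (branches S ∩ branches T))) ∧
    P ∩ Q = ∅ ∧
    (∀ T ∈ P ∪ Q, ∃ R ∈ Q, R ⊆ T) ∧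
    (∀ T ∈ Q, ∀ R ∈ P ∪ Q, R ⊆ T → R ∈ Q) := by
  obtain ⟨hdense, -, hsep⟩ := h
  have not_subset : ∀ T ∈ Q, ∀ R ∈ P, ¬ R ⊆ T := fun T hT R hR => (hsep T hT R hR).2
  refine ⟨fun S hS T hT => ?_, ?_, ?_, ?_⟩
  · by_contra hmeagre
    obtain ⟨s, hs, hsub⟩ := exists_branches_Tres_subset_of_not_isMeagre hmeagre
    have hres : Tres S s ∈ P := hP.2.2 S hS s hs
    exact not_subset T hT _ hres ((hP.2.1 _ hres).subset_of_branches_subset hsub)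
  · exact Set.eq_empty_of_forall_notMem fun T ⟨hTP, hTQ⟩ => not_subset T hTQ T hTP subset_rfl
  · rintro T (hT | hT)
    exacts [hdense T hT, ⟨T, hT, subset_rfl⟩]
  · rintro T hT R (hR | hR) hRT
    exacts [absurd hRT (not_subset T hT R hR), hR]

/-- Lemma 3.2 (pqr) (1): if `P ⊑ Q` then `[S] ∩ [T]` is meager in `[S]` for
`S ∈ P`, `T ∈ Q`; hence `P ∩ Q = ∅` and `Q` is open dense in `P ∪ Q`. -/
theorem stmt12 (P Q : Set (Set Str)) (hP : IsPTF P) (hQ : IsPTF Q)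
    (h : Refines P Q) :
    (∀ S ∈ P, ∀ T ∈ Q,
      IsMeagre ((fun x : branches S => (x : Pt)) ⁻¹' (branches S ∩ branches T))) ∧
    P ∩ Q = ∅ ∧
    (∀ T ∈ P ∪ Q, ∃ R ∈ Q, R ⊆ T) ∧
    (∀ T ∈ Q, ∀ R ∈ P ∪ Q, R ⊆ T → R ∈ Q) :=
  stmt12_general P Q hP h

end
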